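/- arXiv:2103.08391 — 6 statements merged into one kernel-verified Lean document; each statement's English description precedes it below -/
import Mathlib

section
/- For any FOND problem P and any policy π: π is a strong-cyclic solution of P if and only if every maximal π-trajectory that is fair reaches a goal state. -/
namespace FondPaper

/-- A FOND model: initial state, goal states, and transition function
`F a s` giving the set of possible successor states of action `a` in state `s`. -/
structure FOND (S A : Type) where
  init : S
  goal : Set S
  F : A → S → Set S

variable {S A V : Type}

/-- Action `a` is applicable in `s` iff it has some successor. -/
def FOND.Applicable (P : FOND S A) (a : A) (s : S) : Prop := (P.F a s).Nonempty

/-- A policy is a partial function mapping non-goal states into actions. -/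
def IsPolicy (P : FOND S A) (π : S → Option A) : Prop := ∀ s ∈ P.goal, π s = none

/-- A (finite or infinite) trajectory: `len = some n` means the trajectory is
`states 0, …, states n`; `len = none` means it is infinite. -/
structure Traj (S : Type) where
  states : ℕ → S
  len : Option ℕ

/-- Index `i` is within the trajectory. -/
def Traj.Inside (τ : Traj S) (i : ℕ) : Prop := ∀ n, τ.len = some n → i ≤ n

/-- There is a step from index `i` to `i+1` in the trajectory. -/
def Traj.HasStep (τ : Traj S) (i : ℕ) : Prop := ∀ n, τ.len = some n → i < n

/-- `τ` is a π-trajectory of `P`. -/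
def IsTraj (P : FOND S A) (π : S → Option A) (τ : Traj S) : Prop :=
  τ.states 0 = P.init ∧
  ∀ i, τ.HasStep i → ∃ a, π (τ.states i) = some a ∧ τ.states (i + 1) ∈ P.F a (τ.states i)

/-- Maximal trajectory: infinite, or finite ending in the first goal state,
or in a state where the policy is undefined or prescribes an inapplicable action. -/
def MaximalTraj (P : FOND S A) (π : S → Option A) (τ : Traj S) : Prop :=
  τ.len = none ∨
  ∃ n, τ.len = some n ∧
    ((τ.states n ∈ P.goal ∧ ∀ i < n, τ.states i ∉ P.goal) ∨
     π (τ.states n) = none ∨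
     (∃ a, π (τ.states n) = some a ∧ ¬ P.Applicable a (τ.states n)))

/-- The trajectory reaches a goal state. -/
def ReachesGoal (P : FOND S A) (τ : Traj S) : Prop :=
  ∃ i, τ.Inside i ∧ τ.states i ∈ P.goal

/-- `s` is recurrent in `τ`: the trajectory is infinite and `s` occurs infinitely often. -/
def RecurrentIn (τ : Traj S) (s : S) : Prop :=
  τ.len = none ∧ {i | τ.states i = s}.Infinite

/-- One policy step: `s'` is a possible successor of `s` under the policy. -/
def PStep (P : FOND S A) (π : S → Option A) (s s' : S) : Prop :=
  ∃ a, π s = some a ∧ s' ∈ P.F a s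

/-- The policy reaches `s'` from `s`. -/
def ReachesFrom (P : FOND S A) (π : S → Option A) : S → S → Prop :=
  Relation.ReflTransGen (PStep P π)

/-- `s` is reached by the policy: some finite π-trajectory ends at `s`. -/
def ReachedBy (P : FOND S A) (π : S → Option A) (s : S) : Prop :=
  ∃ τ : Traj S, IsTraj P π τ ∧ ∃ n, τ.len = some n ∧ τ.states n = s

/-- Strong-cyclic solution: a goal is reachable via π from every state reached by π. -/
def StrongCyclic (P : FOND S A) (π : S → Option A) : Prop :=
  ∀ s, ReachedBy P π s → ∃ g ∈ P.goal, ReachesFrom P π s g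

/-- Strong solution: every maximal π-trajectory reaches a goal state. -/
def Strong (P : FOND S A) (π : S → Option A) : Prop :=
  ∀ τ : Traj S, IsTraj P π τ → MaximalTraj P π τ → ReachesGoal P τ

/-- Fairness when all actions are fair: each recurrent state is immediately
followed by each of its possible successors infinitely often.
(Finite trajectories have no recurrent states, hence are fair.) -/
def FairAll (P : FOND S A) (π : S → Option A) (τ : Traj S) : Prop :=
  ∀ s, RecurrentIn τ s → ∀ a, π s = some a → ∀ s' ∈ P.F a s,
    {i | τ.states i = s ∧ τ.states (i + 1) = s'}.Infinite

/-- The policy is acyclic: no π-trajectory visits the same state more than once. -/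
def AcyclicPolicy (P : FOND S A) (π : S → Option A) : Prop :=
  ∀ τ : Traj S, IsTraj P π τ → ∀ i j, τ.Inside i → τ.Inside j →
    τ.states i = τ.states j → i = j

/-- The non-deterministic actions of `P`: those with at least two possible
successors in some state. -/
def NonDetActs (P : FOND S A) : Set A :=
  {a | ∃ s s₁ s₂, s₁ ∈ P.F a s ∧ s₂ ∈ P.F a s ∧ s₁ ≠ s₂}

/-- The occurrence of the action `π s` at recurrent state `s` of trajectory `τ`
is fair: for some constraint `(A, B) ∈ C`, `π s ∈ A` and actions from `B`
occur only finitely often along `τ`. -/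
def FairOcc (C : Set (Set A × Set A)) (π : S → Option A) (τ : Traj S) (s : S) : Prop :=
  ∃ c ∈ C, (∃ a, π s = some a ∧ a ∈ c.1) ∧
    ∀ b ∈ c.2, {i | π (τ.states i) = some b}.Finite

/-- `τ` is fair for the FOND+ problem `⟨P, C⟩`. -/
def FairPlus (P : FOND S A) (C : Set (Set A × Set A)) (π : S → Option A) (τ : Traj S) : Prop :=
  ∀ s, RecurrentIn τ s → FairOcc C π τ s → ∀ a, π s = some a → ∀ s' ∈ P.F a s,
    {i | τ.states i = s ∧ τ.states (i + 1) = s'}.Infinite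

/-- `π` solves the FOND+ problem `⟨P, C⟩`. -/
def SolvesPlus (P : FOND S A) (C : Set (Set A × Set A)) (π : S → Option A) : Prop :=
  ∀ τ : Traj S, IsTraj P π τ → MaximalTraj P π τ → FairPlus P C π τ → ReachesGoal P τ

/-- Well-formed set of fairness constraints: finite, each `A`-part a set of
non-deterministic actions and each `B`-part disjoint from the `A`-part. -/
def WellFormedC (P : FOND S A) (C : Set (Set A × Set A)) : Prop :=
  C.Finite ∧ ∀ c ∈ C, c.1 ⊆ NonDetActs P ∧ Disjoint c.1 c.2

/-- A cycle on `s` w.r.t. policy `π`: a sequence `s = t 0, …, t k = s` with `k ≥ 1`,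
each `t i` (`i < k`) non-goal with `π` defined and `t (i+1)` a possible successor. -/
def CycleOn (P : FOND S A) (π : S → Option A) (s : S) (t : ℕ → S) (k : ℕ) : Prop :=
  1 ≤ k ∧ t 0 = s ∧ t k = s ∧
    ∀ i < k, t i ∉ P.goal ∧ ∃ a, π (t i) = some a ∧ t (i + 1) ∈ P.F a (t i)

/-- `s` is fair-for-`T`: for some `(A, B) ∈ C`, `π s ∈ A` and every cycle on `s`
containing a state where `π` prescribes a `B`-action also contains a state in `T`. -/
def FairFor (P : FOND S A) (C : Set (Set A × Set A)) (π : S → Option A)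
    (T : Set S) (s : S) : Prop :=
  ∃ c ∈ C, (∃ a, π s = some a ∧ a ∈ c.1) ∧
    ∀ t k, CycleOn P π s t k →
      (∃ i ≤ k, ∃ b, π (t i) = some b ∧ b ∈ c.2) → ∃ j ≤ k, t j ∈ T

/-- `T` is closed under the FOND+ termination rules. -/
def TermClosed (P : FOND S A) (C : Set (Set A × Set A)) (π : S → Option A) (T : Set S) : Prop :=
  P.goal ⊆ T ∧
  (∀ s a, π s = some a → FairFor P C π T s → (∃ s' ∈ P.F a s, s' ∈ T) → s ∈ T) ∧
  (∀ s a, π s = some a → ¬ FairFor P C π T s → (P.F a s).Nonempty →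
    (∀ s' ∈ P.F a s, s' ∈ T) → s ∈ T)

/-- `s` is terminating for `π` in `⟨P, C⟩`: it belongs to the least set closed
under the FOND+ termination rules. -/
def Terminating (P : FOND S A) (C : Set (Set A × Set A)) (π : S → Option A) (s : S) : Prop :=
  ∀ T : Set S, TermClosed P C π T → s ∈ T

/-- The operator `Φ` of the FOND+ termination computation. -/
def Phi (P : FOND S A) (C : Set (Set A × Set A)) (π : S → Option A) (T : Set S) : Set S :=
  P.goal ∪
  {s | ∃ a, π s = some a ∧ FairFor P C π T s ∧ ∃ s' ∈ P.F a s, s' ∈ T} ∪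
  {s | ∃ a, π s = some a ∧ (P.F a s).Nonempty ∧ P.F a s ⊆ T}

/-- The policy graph of `P` and `π`: edges `(s, s')` for non-goal reachable `s`
with `π s` defined and `s'` a possible successor. -/
def PolicyEdges (P : FOND S A) (π : S → Option A) : Set (S × S) :=
  {e | ReachesFrom P π P.init e.1 ∧ e.1 ∉ P.goal ∧ PStep P π e.1 e.2}

/-- Path (of length ≥ 0) in a graph given by its edge set. -/
def GPath (G : Set (S × S)) : S → S → Prop :=
  Relation.ReflTransGen (fun x y => (x, y) ∈ G)

/-- Edge `e = (s, s')` of `G` is removable by Sieve: `π s` decrements some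
variable `x` not incremented at any state lying on a path in `G` from `s'` back to `s`. -/
def Removable (π : S → Option A) (decs incs : A → Set V) (G : Set (S × S)) (e : S × S) : Prop :=
  e ∈ G ∧ ∃ x : V, (∃ a, π e.1 = some a ∧ x ∈ decs a) ∧
    ∀ w, GPath G e.2 w → GPath G w e.1 → ∀ a, π w = some a → x ∉ incs a

/-- One Sieve edge-removal step. -/
def SieveStep (π : S → Option A) (decs incs : A → Set V) (G G' : Set (S × S)) : Prop :=
  ∃ e, Removable π decs incs G e ∧ G' = G \ {e}

/-- Graph acyclicity: no nonempty path from a state back to itself. -/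
def GAcyclic (G : Set (S × S)) : Prop :=
  ∀ s s', (s, s') ∈ G → ¬ GPath G s' s

/-- A cycle on `s` in a graph given by its edge set. -/
def ECycleOn (E : Set (S × S)) (s : S) (t : ℕ → S) (k : ℕ) : Prop :=
  1 ≤ k ∧ t 0 = s ∧ t k = s ∧ ∀ i < k, (t i, t (i + 1)) ∈ E

/-- `T` is closed under the QNP termination rules. -/
def QNPClosed (P : FOND S A) (π : S → Option A) (decs incs : A → Set V) (T : Set S) : Prop :=
  ∀ s, ReachesFrom P π P.init s →
    ((¬ ∃ t k, ECycleOn (PolicyEdges P π) s t k) ∨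
     (∀ t k, ECycleOn (PolicyEdges P π) s t k → ∃ j ≤ k, t j ∈ T) ∨
     (∃ x, (∃ a, π s = some a ∧ x ∈ decs a) ∧
        ∀ t k, ECycleOn (PolicyEdges P π) s t k →
          (∃ i ≤ k, ∃ a, π (t i) = some a ∧ x ∈ incs a) → ∃ j ≤ k, t j ∈ T)) →
    s ∈ T

/-- `s` is QNP-terminating: it belongs to the least set closed under the QNP
termination rules. -/
def QNPTerm (P : FOND S A) (π : S → Option A) (decs incs : A → Set V) (s : S) : Prop :=
  ∀ T : Set S, QNPClosed P π decs incs T → s ∈ T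

/-- `T` is closed under the Dual-FOND termination rules. -/
def DualClosed (P : FOND S A) (fair : A → Prop) (π : S → Option A) (T : Set S) : Prop :=
  P.goal ⊆ T ∧
  (∀ s a, π s = some a → fair a → (∃ s' ∈ P.F a s, s' ∈ T) → s ∈ T) ∧
  (∀ s a, π s = some a → ¬ fair a → (P.F a s).Nonempty →
    (∀ s' ∈ P.F a s, s' ∈ T) → s ∈ T)

/-- `s` is Dual-FOND terminating. -/
def DualTerm (P : FOND S A) (fair : A → Prop) (π : S → Option A) (s : S) : Prop :=
  ∀ T : Set S, DualClosed P fair π T → s ∈ T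

/-- `π` solves the Dual FOND problem `(P, fair)`. -/
def SolvesDual [Fintype S] (P : FOND S A) (fair : A → Prop) (π : S → Option A) : Prop :=
  (∀ s, ReachedBy P π s → s ∉ P.goal → ∃ a, π s = some a ∧ (P.F a s).Nonempty) ∧
  ∃ d : S → ℕ,
    (∀ s, ReachedBy P π s → d s ≤ Fintype.card S) ∧
    (∀ s, ReachedBy P π s → s ∈ P.goal → d s = 0) ∧
    (∀ s a, ReachedBy P π s → π s = some a →
      (fair a → ∃ s' ∈ P.F a s, d s' < d s) ∧
      (¬ fair a → ∀ s' ∈ P.F a s, d s' < d s))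

end FondPaper

open FondPaper

/-!
If `π` is strong-cyclic, a finite maximal trajectory ends in a state without policy successors,
which can only reach a goal by being one. On an infinite fair trajectory the recurrent states
form a nonempty set (the state space is finite) closed under policy steps, by fairness; it
contains a reached state, hence a goal reachable from it.

Conversely, suppose a reached state `s` reaches no goal. Since the policy is undefined on goals,
any trajectory that follows a path to `s` and then stays among the states reachable from `s`
misses the goal. If one of those states has no policy successor, a path to it is a finite
maximal trajectory. Otherwise a fair infinite run is built round-robin: enumerate the pairs of
states so that each pair recurs infinitely often, and at stage `m` walk to the source of the
`m`-th pair and take it as an edge whenever possible. An edge leaving a recurrent state is then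
taken infinitely often.
-/

open Relation List

namespace FondPaper

section Paths

variable {α : Type*} {r : α → α → Prop}

theorem reflTransGen_apply_of_succ_of_le (f : ℕ → α) {m n : ℕ}
    (h : ∀ i ∈ Set.Ico m n, r (f i) (f (i + 1))) (hmn : m ≤ n) : ReflTransGen r (f m) (f n) :=
  (reflTransGen_of_succ_of_le (fun i j => r (f i) (f j)) h hmn).lift f fun _ _ h => h

theorem _root_.Relation.ReflTransGen.exists_seq {a b : α} (h : ReflTransGen r a b) :
    ∃ (n : ℕ) (w : ℕ → α), w 0 = a ∧ w n = b ∧ ∀ i < n, r (w i) (w (i + 1)) := by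
  induction h with
  | refl => exact ⟨0, fun _ => a, rfl, rfl, by simp⟩
  | @tail c d _ hcd ih =>
    obtain ⟨n, w, hw0, hwn, hw⟩ := ih
    refine ⟨n + 1, Function.update w (n + 1) d, by simp [hw0], by simp, fun i hi => ?_⟩
    rcases (Nat.lt_succ_iff.mp hi).lt_or_eq with hi | rfl
    · rw [Function.update_of_ne (by omega), Function.update_of_ne (by omega)]
      exact hw i hi
    · rw [Function.update_of_ne (by omega), Function.update_self, hwn]
      exact hcd

end Paths

section QueueRun

variable {α : Type*} {r : α → α → Prop} (plan : ℕ → α → List α)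

/-- A configuration `(x, l, m)` is the current state `x`, the queue `l` of states still to visit,
and the index `m` of the next plan to request once the queue is empty. -/
def queueStep : α × List α × ℕ → α × List α × ℕ
  | (_, y :: l, m) => (y, l, m)
  | (x, [], m) =>
    match plan m x with
    | [] => (x, [], m + 1)
    | y :: l => (y, l, m + 1)

theorem queueStep_iterate {x : α} {l : List α} {m k : ℕ} (hk : k < (x :: l).length) :
    (queueStep plan)^[k] (x, l, m) = ((x :: l)[k], l.drop k, m) := by
  induction k generalizing x l with
  | zero => simp
  | succ k ih =>
    obtain _ | ⟨y, l⟩ := l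
    · simp at hk
    · rw [Function.iterate_succ_apply]
      exact ih (Nat.lt_of_succ_lt_succ hk)

theorem queueStep_iterate_replan {x : α} {m k : ℕ} {y : α} {l : List α}
    (hplan : plan m x = y :: l) (hk : k < (y :: l).length) :
    (queueStep plan)^[k + 1] (x, [], m) = ((y :: l)[k], l.drop k, m + 1) := by
  rw [Function.iterate_succ_apply]
  simp only [queueStep, hplan]
  exact queueStep_iterate plan hk

theorem queueStep_iterate_of_getElem? {x w : α} {m k : ℕ}
    (hk : (x :: plan m x)[k]? = some w) : ((queueStep plan)^[k] (x, [], m)).1 = w := by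
  obtain _ | k := k
  · simpa using hk
  · rcases hxy : plan m x with _ | ⟨y, l⟩
    · simp [hxy] at hk
    · obtain ⟨hlt, hw⟩ := List.getElem?_eq_some_iff.mp (hxy ▸ hk)
      rw [queueStep_iterate_replan plan hxy (by simpa using hlt)]
      simpa using hw

def QueueInv (r : α → α → Prop) (s : α) (c : α × List α × ℕ) : Prop :=
  IsChain r (c.1 :: c.2.1) ∧ ReflTransGen r s ((c.1 :: c.2.1).getLast (cons_ne_nil _ _))

def ValidPlan (r : α → α → Prop) (s : α) (plan : ℕ → α → List α) : Prop :=
  ∀ m x, ReflTransGen r s x → IsChain r (x :: plan m x) ∧ plan m x ≠ []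

variable {plan} {s : α}

theorem QueueInv.queueStep (hplan : ValidPlan r s plan) {c : α × List α × ℕ}
    (hc : QueueInv r s c) :
    QueueInv r s (queueStep plan c) ∧ r c.1 (queueStep plan c).1 := by
  obtain ⟨x, _ | ⟨y, l⟩, m⟩ := c
  · obtain ⟨hchain, hne⟩ := hplan m x hc.2
    rcases hp : plan m x with _ | ⟨y, l⟩
    · exact absurd hp hne
    rw [hp] at hchain
    simp only [FondPaper.queueStep, hp]
    refine ⟨⟨hchain.tail, ?_⟩, (isChain_cons_cons.mp hchain).1⟩
    exact hc.2.trans (relationReflTransGen_of_exists_isChain_cons _ hchain (getLast_cons_cons ..))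
  · refine ⟨⟨hc.1.tail, ?_⟩, (isChain_cons_cons.mp hc.1).1⟩
    simpa only [FondPaper.queueStep, getLast_cons_cons] using hc.2

theorem queueInv_iterate (hplan : ValidPlan r s plan) {c : α × List α × ℕ}
    (hc : QueueInv r s c) (n : ℕ) :
    QueueInv r s ((queueStep plan)^[n] c) := by
  induction n with
  | zero => exact hc
  | succ n ih => simpa only [Function.iterate_succ_apply'] using (ih.queueStep hplan).1

theorem rel_queueStep_iterate (hplan : ValidPlan r s plan) {c : α × List α × ℕ}
    (hc : QueueInv r s c) (n : ℕ) :
    r ((queueStep plan)^[n] c).1 ((queueStep plan)^[n + 1] c).1 := by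
  simpa only [Function.iterate_succ_apply'] using ((queueInv_iterate hplan hc n).queueStep hplan).2

theorem exists_replan_time (hplan : ValidPlan r s plan) {u : α} {l₀ : List α}
    (hc : QueueInv r s (u, l₀, 0)) (m : ℕ) :
    ∃ T ≥ m, ∃ x, (queueStep plan)^[T] (u, l₀, 0) = (x, [], m) := by
  induction m with
  | zero =>
    exact ⟨l₀.length, Nat.zero_le _, _, by rw [queueStep_iterate plan (lt_add_one _), drop_length]⟩
  | succ m ih =>
    obtain ⟨T, hTm, x, hT⟩ := ih
    have hx : ReflTransGen r s x := by simpa [QueueInv, hT] using (queueInv_iterate hplan hc T).2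
    obtain ⟨y, l, hxy⟩ := ne_nil_iff_exists_cons.mp (hplan m x hx).2
    refine ⟨l.length + 1 + T, by omega, (y :: l)[l.length], ?_⟩
    rw [Function.iterate_add_apply, hT, queueStep_iterate_replan plan hxy (lt_add_one _)]
    simp

end QueueRun

section FairRun

variable {α β : Type*} {r : α → α → Prop}

theorem exists_seq_infinite_fibers [Countable β] [Nonempty β] :
    ∃ g : ℕ → β, ∀ b, {m | g m = b}.Infinite := by
  obtain ⟨f, hf⟩ := exists_surjective_nat β
  refine ⟨fun n => f n.unpair.2, fun b => ?_⟩
  obtain ⟨m, rfl⟩ := hf b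
  exact Set.infinite_of_injective_forall_mem (f := fun j => Nat.pair j m)
    (fun a b hab => (Nat.pair_eq_pair.mp hab).1) (fun j => by simp)

open Classical in
noncomputable def detour (r : α → α → Prop) (e : α × α) (z : α) : List α :=
  if h : ReflTransGen r z e.1 ∧ r e.1 e.2 then
    (exists_isChain_cons_of_relationReflTransGen h.1).choose ++ [e.2]
  else if h : ∃ y, r z y then [h.choose] else []

theorem isChain_detour (e : α × α) (z : α) : IsChain r (z :: detour r e z) := by
  unfold detour
  split_ifs with h h'
  · obtain ⟨hchain, hlast⟩ := (exists_isChain_cons_of_relationReflTransGen h.1).choose_spec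
    rw [← cons_append]
    refine hchain.append (isChain_singleton _) ?_
    simp [getLast?_eq_some_getLast (cons_ne_nil _ _), hlast, h.2]
  · exact isChain_pair.mpr h'.choose_spec
  · exact isChain_singleton z

theorem detour_ne_nil (e : α × α) {z : α} (hz : ∃ y, r z y) : detour r e z ≠ [] := by
  unfold detour
  split_ifs <;> simp

theorem exists_detour_edge {e : α × α} {z : α} (hz : ReflTransGen r z e.1) (he : r e.1 e.2) :
    ∃ k, (z :: detour r e z)[k]? = some e.1 ∧ (z :: detour r e z)[k + 1]? = some e.2 := by
  obtain ⟨-, hlast⟩ := (exists_isChain_cons_of_relationReflTransGen hz).choose_spec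
  set p := (exists_isChain_cons_of_relationReflTransGen hz).choose
  have hdetour : z :: detour r e z = (z :: p) ++ [e.2] := by
    simp [detour, hz, he, p]
  refine ⟨p.length, ?_, ?_⟩
  · rw [hdetour, getElem?_append_left (by simp), ← hlast, getLast_eq_getElem]
    simp
  · rw [hdetour, getElem?_append_right (by simp)]
    simp

theorem exists_fair_run [Countable α] {u s : α} (hus : ReflTransGen r u s)
    (hsucc : ∀ x, ReflTransGen r s x → ∃ y, r x y) :
    ∃ f : ℕ → α, f 0 = u ∧ (∀ n, r (f n) (f (n + 1))) ∧
      ∀ x y, {n | f n = x}.Infinite → r x y → {n | f n = x ∧ f (n + 1) = y}.Infinite := by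
  have : Nonempty α := ⟨u⟩
  obtain ⟨g, hg⟩ := exists_seq_infinite_fibers (β := α × α)
  set plan : ℕ → α → List α := fun m => detour r (g m)
  have hplan : ValidPlan r s plan := fun m x hx =>
    ⟨isChain_detour _ _, detour_ne_nil _ (hsucc x hx)⟩
  obtain ⟨l₀, hchain, hlast⟩ := exists_isChain_cons_of_relationReflTransGen hus
  have hc₀ : QueueInv r s (u, l₀, 0) := ⟨hchain, hlast ▸ ReflTransGen.refl⟩
  set f : ℕ → α := fun n => ((queueStep plan)^[n] (u, l₀, 0)).1
  have hstep : ∀ n, r (f n) (f (n + 1)) := rel_queueStep_iterate hplan hc₀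
  refine ⟨f, rfl, hstep, fun x y hx hxy => Set.infinite_of_forall_exists_gt fun N => ?_⟩
  obtain ⟨m, hm : g m = (x, y), hNm⟩ := (hg (x, y)).exists_gt N
  obtain ⟨T, hmT, z, hT⟩ := exists_replan_time hplan hc₀ m
  obtain ⟨j, hj, hTj⟩ := hx.exists_gt T
  have hzx : ReflTransGen r (f T) (f j) :=
    reflTransGen_apply_of_succ_of_le f (fun i _ => hstep i) hTj.le
  rw [show f T = z by simp [f, hT], show f j = x from hj] at hzx
  obtain ⟨k, hkx, hky⟩ := exists_detour_edge (e := (x, y)) hzx hxy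
  have hfT : ∀ {i w}, (z :: plan m z)[i]? = some w → f (i + T) = w := fun hi => by
    simp only [f, Function.iterate_add_apply, hT]
    exact queueStep_iterate_of_getElem? plan hi
  refine ⟨k + T, ⟨hfT (by simpa [plan, hm] using hkx), ?_⟩, by omega⟩
  rw [Nat.add_right_comm]
  exact hfT (by simpa [plan, hm] using hky)

end FairRun

section Fond

variable {S A : Type} {P : FOND S A} {π : S → Option A} {τ : Traj S}

theorem IsTraj.reachedBy (hτ : IsTraj P π τ) {i : ℕ} (hi : τ.Inside i) :
    ReachedBy P π (τ.states i) :=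
  ⟨⟨τ.states, some i⟩, ⟨hτ.1, fun j hj => hτ.2 j fun n hn => (hj i rfl).trans_le (hi n hn)⟩,
    i, rfl, rfl⟩

theorem ReachedBy.reachesFrom_init {s : S} (hs : ReachedBy P π s) : ReachesFrom P π P.init s := by
  obtain ⟨τ, hτ, n, hn, rfl⟩ := hs
  rw [← hτ.1]
  exact reflTransGen_apply_of_succ_of_le τ.states
    (fun i hi => hτ.2 i fun m hm => by simp_all) (Nat.zero_le n)

theorem PStep.notMem_goal (hπ : IsPolicy P π) {s t : S} (h : PStep P π s t) :
    s ∉ P.goal := by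
  obtain ⟨a, ha, -⟩ := h
  intro hs
  simp [hπ s hs] at ha

theorem FairAll.infinite_of_reachesFrom (hfair : FairAll P π τ) (hinf : τ.len = none) {s t : S}
    (hs : {i | τ.states i = s}.Infinite) (hst : ReachesFrom P π s t) :
    {i | τ.states i = t}.Infinite := by
  induction hst with
  | refl => exact hs
  | tail _ hstep ih =>
    obtain ⟨a, ha, hmem⟩ := hstep
    refine ((hfair _ ⟨hinf, ih⟩ a ha _ hmem).image (add_left_injective 1).injOn).mono ?_
    rintro _ ⟨i, ⟨-, hi⟩, rfl⟩
    exact hi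

theorem reachesGoal_of_strongCyclic [Finite S] (hsc : StrongCyclic P π) (hτ : IsTraj P π τ)
    (hmax : MaximalTraj P π τ) (hfair : FairAll P π τ) : ReachesGoal P τ := by
  rcases hmax with hinf | ⟨n, hn, hlast⟩
  · have hinside : ∀ i, τ.Inside i := fun i n hn => by simp [hinf] at hn
    obtain ⟨s, hs⟩ := Finite.exists_infinite_fiber τ.states
    rw [Set.infinite_coe_iff] at hs
    obtain ⟨i, hi : τ.states i = s⟩ := hs.nonempty
    obtain ⟨g, hg, hsg⟩ := hsc _ (hτ.reachedBy (hinside i))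
    obtain ⟨j, hj : τ.states j = g⟩ := (hfair.infinite_of_reachesFrom hinf hs (hi ▸ hsg)).nonempty
    exact ⟨j, hinside j, hj ▸ hg⟩
  · have hinside : τ.Inside n := fun m hm => by simp_all
    refine ⟨n, hinside, ?_⟩
    rcases hlast with ⟨hgoal, -⟩ | hlast
    · exact hgoal
    have hstuck : ∀ t, ¬PStep P π (τ.states n) t := by
      rintro t ⟨a, ha, ht⟩
      rcases hlast with hnone | ⟨b, hb, hnapp⟩
      · simp [hnone] at ha
      · exact hnapp (Option.some_injective _ (hb.symm.trans ha) ▸ ⟨t, ht⟩)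
    obtain ⟨g, hg, hsg⟩ := hsc _ (hτ.reachedBy hinside)
    rcases hsg.cases_head with rfl | ⟨t, ht, -⟩
    · exact hg
    · exact absurd ht (hstuck t)

theorem strongCyclic_of_forall_fair [Countable S] (hπ : IsPolicy P π)
    (h : ∀ τ, IsTraj P π τ → MaximalTraj P π τ → FairAll P π τ → ReachesGoal P τ) :
    StrongCyclic P π := by
  intro s hs
  by_contra! hns
  by_cases hstuck : ∃ t, ReachesFrom P π s t ∧ ∀ t', ¬PStep P π t t'
  · obtain ⟨t, hst, ht⟩ := hstuck
    obtain ⟨n, w, hw0, hwn, hw⟩ := (hs.reachesFrom_init.trans hst).exists_seq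
    have hmax : MaximalTraj P π ⟨w, some n⟩ := by
      refine Or.inr ⟨n, rfl, Or.inr ?_⟩
      rcases ha : π (w n) with _ | a
      · exact Or.inl rfl
      · exact Or.inr ⟨a, rfl, fun ⟨t', ht'⟩ => ht t' ⟨a, hwn ▸ ha, hwn ▸ ht'⟩⟩
    obtain ⟨i, hi, hgoal⟩ :=
      h ⟨w, some n⟩ ⟨hw0, fun i hi => hw i (hi n rfl)⟩ hmax fun x hx => by cases hx.1
    rcases (hi n rfl).lt_or_eq with hi | rfl
    · exact (hw i hi).notMem_goal hπ hgoal
    · exact hns _ (hwn ▸ hgoal) hst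
  · push Not at hstuck
    obtain ⟨f, hf0, hf, hfair⟩ := exists_fair_run hs.reachesFrom_init hstuck
    obtain ⟨i, -, hi⟩ := h ⟨f, none⟩ ⟨hf0, fun i _ => hf i⟩ (Or.inl rfl)
      fun x hx a ha y hy => hfair x y hx.2 ⟨a, ha, hy⟩
    exact (hf i).notMem_goal hπ hi

end Fond

end FondPaper

open FondPaper

theorem stmt0_general (S A : Type) [Finite S] (P : FOND S A)
    (π : S → Option A) (hπ : IsPolicy P π) :
    StrongCyclic P π ↔
      ∀ τ : Traj S, IsTraj P π τ → MaximalTraj P π τ → FairAll P π τ → ReachesGoal P τ :=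
  ⟨fun hsc _ => reachesGoal_of_strongCyclic hsc, strongCyclic_of_forall_fair hπ⟩

/-- π is a strong-cyclic solution of P iff every maximal π-trajectory
that is fair (all actions fair) reaches a goal state. -/
theorem stmt0 (S A : Type) [Finite S] [Finite A] (P : FOND S A) (hgoal : P.goal.Nonempty)
    (π : S → Option A) (hπ : IsPolicy P π) :
    StrongCyclic P π ↔
      ∀ τ : Traj S, IsTraj P π τ → MaximalTraj P π τ → FairAll P π τ → ReachesGoal P τ :=
  stmt0_general S A P π hπ
end

section
/- Let τ be an infinite fair π-trajectory of a FOND problem P, let s be a recurrent state of τ, and suppose π reaches s' from s. Then s' occurs infinitely often in τ (in particular, τ visits every state that is reachable via π from any of its recurrent states). -/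
namespace FondPaper

variable {S A V : Type}

theorem infinite_setOf_eq_of_infinite_consecutive {f : ℕ → S} {x y : S}
    (h : {i | f i = x ∧ f (i + 1) = y}.Infinite) : {i | f i = y}.Infinite :=
  (h.image (add_left_injective 1).injOn).mono <| by
    rintro _ ⟨i, ⟨-, hi⟩, rfl⟩
    exact hi

theorem RecurrentIn.of_pStep {P : FOND S A} {π : S → Option A} {τ : Traj S} {s s' : S}
    (hfair : FairAll P π τ) (hrec : RecurrentIn τ s) (hstep : PStep P π s s') :
    RecurrentIn τ s' := by
  obtain ⟨a, ha, hs'⟩ := hstep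
  exact ⟨hrec.1, infinite_setOf_eq_of_infinite_consecutive (hfair s hrec a ha s' hs')⟩

theorem RecurrentIn.of_reachesFrom {P : FOND S A} {π : S → Option A} {τ : Traj S} {s s' : S}
    (hfair : FairAll P π τ) (hrec : RecurrentIn τ s) (hreach : ReachesFrom P π s s') :
    RecurrentIn τ s' := by
  induction hreach with
  | refl => exact hrec
  | tail _ hstep ih => exact ih.of_pStep hfair hstep

end FondPaper

open FondPaper

theorem stmt1_general (S A : Type) (P : FOND S A)
    (π : S → Option A) (τ : Traj S)
    (hfair : FairAll P π τ) (s s' : S)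
    (hrec : RecurrentIn τ s) (hreach : ReachesFrom P π s s') :
    {i | τ.states i = s'}.Infinite :=
  (hrec.of_reachesFrom hfair hreach).2

/-- if τ is an infinite fair π-trajectory, s is recurrent in τ, and
π reaches s' from s, then s' occurs infinitely often in τ. -/
theorem stmt1 (S A : Type) [Finite S] [Finite A] (P : FOND S A) (hgoal : P.goal.Nonempty)
    (π : S → Option A) (hπ : IsPolicy P π) (τ : Traj S) (hτ : IsTraj P π τ)
    (hinf : τ.len = none) (hfair : FairAll P π τ) (s s' : S)
    (hrec : RecurrentIn τ s) (hreach : ReachesFrom P π s s') :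
    {i | τ.states i = s'}.Infinite :=
  stmt1_general S A P π τ hfair s s' hrec hreach
end

section
/- For any FOND problem P and any policy π: π is a strong solution of P if and only if π is a strong-cyclic solution of P and π is acyclic, i.e., no π-trajectory visits the same state more than once. -/
open FondPaper

/-!
For a policy that is undefined on goal states, a goal can occur in a π-trajectory only as its
last state. Hence π is a strong solution iff there is no infinite π-path from `s0` and every
non-goal state reachable under π has a π-successor. Strong-cyclicity gives the successors, and
acyclicity on a finite state space rules out infinite paths. Conversely, a reachable cycle, or a
reachable state from which no goal is reachable, yields an infinite π-path.
-/

namespace FondPaper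

open Relation

section Chains

variable {α : Type*} {r : α → α → Prop} {a b : α}

def HasInfiniteChain (r : α → α → Prop) (a : α) : Prop :=
  ∃ u : ℕ → α, u 0 = a ∧ ∀ k, r (u k) (u (k + 1))

theorem hasInfiniteChain_of_forall_exists {M : Set α} (hM : ∀ x ∈ M, ∃ y ∈ M, r x y)
    (ha : a ∈ M) : HasInfiniteChain r a := by
  choose! f hfM hf using hM
  have hmaps : Set.MapsTo f M M := fun x hx => hfM x hx
  refine ⟨fun k => f^[k] a, rfl, fun k => ?_⟩
  show r (f^[k] a) (f^[k + 1] a)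
  rw [Function.iterate_succ_apply']
  exact hf _ (hmaps.iterate k ha)

theorem HasInfiniteChain.of_transGen_self (h : TransGen r a a) : HasInfiniteChain r a := by
  refine hasInfiniteChain_of_forall_exists (M := {x | TransGen r x a}) (fun x hx => ?_) h
  obtain ⟨y, hxy, hya⟩ := TransGen.head'_iff.1 hx
  rcases reflTransGen_iff_eq_or_transGen.1 hya with rfl | hya
  · exact ⟨a, h, hxy⟩
  · exact ⟨y, hya, hxy⟩

theorem HasInfiniteChain.head (hab : r a b) (h : HasInfiniteChain r b) : HasInfiniteChain r a := by
  obtain ⟨u, rfl, hu⟩ := h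
  exact ⟨fun | 0 => a | k + 1 => u k, rfl, fun | 0 => hab | k + 1 => hu k⟩

theorem HasInfiniteChain.of_reflTransGen (hab : ReflTransGen r a b) (h : HasInfiniteChain r b) :
    HasInfiniteChain r a := by
  induction hab using ReflTransGen.head_induction_on with
  | refl => exact h
  | head hac _ ih => exact ih.head hac

end Chains

variable {S A : Type} {P : FOND S A} {π : S → Option A} {τ : Traj S} {s : S} {i j : ℕ}

theorem Traj.Inside.hasStep_of_lt (hj : τ.Inside j) (hij : i < j) : τ.HasStep i :=
  fun n hn => hij.trans_le (hj n hn)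

theorem Traj.inside_of_len_eq_some {n : ℕ} (hlen : τ.len = some n) (hi : i ≤ n) : τ.Inside i := by
  intro m hm
  rw [hlen, Option.some_inj] at hm
  exact hm ▸ hi

theorem isTraj_mk_none_iff {u : ℕ → S} :
    IsTraj P π ⟨u, none⟩ ↔ u 0 = P.init ∧ ∀ k, PStep P π (u k) (u (k + 1)) := by
  simp [IsTraj, Traj.HasStep, PStep]

theorem IsTraj.reachesFrom (hτ : IsTraj P π τ) (hij : i ≤ j) (hj : τ.Inside j) :
    ReachesFrom P π (τ.states i) (τ.states j) := by
  refine (reflTransGen_of_succ_of_le (fun k l => PStep P π (τ.states k) (τ.states l))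
    (fun k hk => ?_) hij).lift τ.states fun _ _ h => h
  rw [Order.succ_eq_add_one]
  exact hτ.2 k (hj.hasStep_of_lt hk.2)

theorem IsTraj.transGen (hτ : IsTraj P π τ) (hij : i < j) (hj : τ.Inside j) :
    TransGen (PStep P π) (τ.states i) (τ.states j) :=
  TransGen.head' (hτ.2 i (hj.hasStep_of_lt hij)) (hτ.reachesFrom hij hj)

theorem IsTraj.not_mem_goal (hπ : IsPolicy P π) (hτ : IsTraj P π τ) (hi : τ.HasStep i) :
    τ.states i ∉ P.goal := by
  intro hg
  obtain ⟨a, ha, -⟩ := hτ.2 i hi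
  simp [hπ _ hg] at ha

theorem ReachedBy.of_pStep {s' : S} (hs : ReachedBy P π s) (h : PStep P π s s') :
    ReachedBy P π s' := by
  obtain ⟨τ, hτ, n, hlen, rfl⟩ := hs
  refine ⟨⟨fun k => if k ≤ n then τ.states k else s', some (n + 1)⟩, ⟨?_, fun k hk => ?_⟩,
    n + 1, rfl, by simp⟩
  · simpa using hτ.1
  · have hkn : k ≤ n := Nat.lt_succ_iff.1 (hk _ rfl)
    rcases hkn.lt_or_eq with hkn | rfl
    · simpa [hkn.le, Nat.succ_le_of_lt hkn] using
        hτ.2 k ((Traj.inside_of_len_eq_some hlen le_rfl).hasStep_of_lt hkn)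
    · simpa [PStep] using h

theorem reachedBy_iff : ReachedBy P π s ↔ ReachesFrom P π P.init s := by
  constructor
  · rintro ⟨τ, hτ, n, hlen, rfl⟩
    exact hτ.1 ▸ hτ.reachesFrom n.zero_le (Traj.inside_of_len_eq_some hlen le_rfl)
  · intro hs
    induction hs with
    | refl =>
      exact ⟨⟨fun _ => P.init, some 0⟩, ⟨rfl, fun k hk => absurd (hk 0 rfl) k.not_lt_zero⟩,
        0, rfl, rfl⟩
    | tail _ h ih => exact ih.of_pStep h

theorem not_exists_pStep_iff :
    (¬ ∃ s', PStep P π s s') ↔ π s = none ∨ ∃ a, π s = some a ∧ ¬ P.Applicable a s := by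
  cases h : π s <;> simp [PStep, FOND.Applicable, Set.Nonempty, h]

theorem strong_iff (hπ : IsPolicy P π) :
    Strong P π ↔ ¬ HasInfiniteChain (PStep P π) P.init ∧
      ∀ s, ReachesFrom P π P.init s → s ∉ P.goal → ∃ s', PStep P π s s' := by
  constructor
  · intro hst
    refine ⟨fun ⟨u, hu0, hu⟩ => ?_, fun s hs hng => ?_⟩
    · have hτ := isTraj_mk_none_iff.2 ⟨hu0, hu⟩
      obtain ⟨i, -, hi⟩ := hst _ hτ (Or.inl rfl)
      exact hτ.not_mem_goal hπ (fun _ h => nomatch h) hi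
    · by_contra hdead
      obtain ⟨τ, hτ, n, hlen, rfl⟩ := reachedBy_iff.2 hs
      obtain ⟨i, hin, hi⟩ := hst τ hτ (Or.inr ⟨n, hlen, Or.inr (not_exists_pStep_iff.1 hdead)⟩)
      rcases (hin n hlen).lt_or_eq with hin | rfl
      · exact hτ.not_mem_goal hπ ((Traj.inside_of_len_eq_some hlen le_rfl).hasStep_of_lt hin) hi
      · exact hng hi
  · rintro ⟨hinf, hdead⟩ τ hτ (hlen | ⟨n, hlen, hend⟩)
    · exact absurd ⟨τ.states, hτ.1, fun k => hτ.2 k (by simp [Traj.HasStep, hlen])⟩ hinf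
    · have hn := Traj.inside_of_len_eq_some hlen le_rfl
      refine ⟨n, hn, ?_⟩
      rcases hend with ⟨hg, -⟩ | hstuck
      · exact hg
      · by_contra hng
        exact not_exists_pStep_iff.2 hstuck
          (hdead _ (hτ.1 ▸ hτ.reachesFrom n.zero_le hn) hng)

theorem strongCyclic_of_not_hasInfiniteChain (hinf : ¬ HasInfiniteChain (PStep P π) P.init)
    (hdead : ∀ s, ReachesFrom P π P.init s → s ∉ P.goal → ∃ s', PStep P π s s') :
    StrongCyclic P π := by
  intro s hs
  by_contra hng
  refine hinf ((hasInfiniteChain_of_forall_exists (M := {t | ReachesFrom P π s t})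
    (fun t ht => ?_) ReflTransGen.refl).of_reflTransGen (reachedBy_iff.1 hs))
  obtain ⟨t', h⟩ := hdead t ((reachedBy_iff.1 hs).trans ht) fun htg => hng ⟨t, htg, ht⟩
  exact ⟨t', ht.tail h, h⟩

theorem acyclicPolicy_of_not_hasInfiniteChain (hinf : ¬ HasInfiniteChain (PStep P π) P.init) :
    AcyclicPolicy P π := by
  intro τ hτ i j hi hj heq
  by_contra hne
  wlog hij : i < j generalizing i j
  · exact this j i hj hi heq.symm (Ne.symm hne) (by omega)
  have hcycle := hτ.transGen hij hj
  rw [← heq] at hcycle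
  exact hinf ((HasInfiniteChain.of_transGen_self hcycle).of_reflTransGen
    (hτ.1 ▸ hτ.reachesFrom i.zero_le hi))

theorem StrongCyclic.exists_pStep (hsc : StrongCyclic P π) (hs : ReachesFrom P π P.init s)
    (hng : s ∉ P.goal) : ∃ s', PStep P π s s' := by
  obtain ⟨g, hg, hsg⟩ := hsc s (reachedBy_iff.2 hs)
  rcases hsg.cases_head with rfl | ⟨s', h, -⟩
  · exact absurd hg hng
  · exact ⟨s', h⟩

theorem AcyclicPolicy.not_hasInfiniteChain [Finite S] (hac : AcyclicPolicy P π) :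
    ¬ HasInfiniteChain (PStep P π) P.init := by
  rintro ⟨u, hu0, hu⟩
  have hτ := isTraj_mk_none_iff.2 ⟨hu0, hu⟩
  exact not_injective_infinite_finite u
    fun i j h => hac _ hτ i j (fun _ h => nomatch h) (fun _ h => nomatch h) h

end FondPaper

theorem stmt2_general (S A : Type) [Finite S] (P : FOND S A)
    (π : S → Option A) (hπ : IsPolicy P π) :
    Strong P π ↔ StrongCyclic P π ∧ AcyclicPolicy P π := by
  rw [strong_iff hπ]
  constructor
  · rintro ⟨hinf, hdead⟩
    exact ⟨strongCyclic_of_not_hasInfiniteChain hinf hdead,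
      acyclicPolicy_of_not_hasInfiniteChain hinf⟩
  · rintro ⟨hsc, hac⟩
    exact ⟨hac.not_hasInfiniteChain, fun _ => hsc.exists_pStep⟩

/-- π is a strong solution of P iff π is a strong-cyclic solution of P
and no π-trajectory visits the same state more than once. -/
theorem stmt2 (S A : Type) [Finite S] [Finite A] (P : FOND S A) (hgoal : P.goal.Nonempty)
    (π : S → Option A) (hπ : IsPolicy P π) :
    Strong P π ↔ StrongCyclic P π ∧ AcyclicPolicy P π :=
  stmt2_general S A P π hπ
end

section
/- For any FOND problem P, policy π, and decrement/increment labeling of the actions, the graph obtained by running the Sieve procedure on the policy graph G(P, π) until no further edge removals are possible is independent of the order in which edges are removed: any two maximal sequences of Sieve edge removals yield the same final graph (in particular, whether the final graph is acyclic does not depend on the removal order). -/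
open FondPaper

/-!
An edge that is removable in a graph stays removable in every subgraph still containing it,
since the subgraph has fewer paths back from the target of the edge to its source. So if a
graph `F` admits no Sieve step and lies inside the start graph of a Sieve run, it lies inside
every graph of the run: the edge removed at each step would otherwise be removable in `F`.
Two final graphs of runs from the same start therefore contain each other.
-/

namespace FondPaper

variable {S A V : Type} {π : S → Option A} {decs incs : A → Set V}

theorem GPath.mono {G H : Set (S × S)} (hGH : G ⊆ H) {s t : S} (h : GPath G s t) :
    GPath H s t :=
  Relation.ReflTransGen.mono (p := fun x y => (x, y) ∈ H) (fun _ _ hst => hGH hst) _ _ h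

theorem Removable.of_subset {G H : Set (S × S)} {e : S × S} (hHG : H ⊆ G) (he : e ∈ H)
    (hrem : Removable π decs incs G e) : Removable π decs incs H e := by
  obtain ⟨-, x, hdec, hinc⟩ := hrem
  exact ⟨he, x, hdec, fun w hto hback => hinc w (hto.mono hHG) (hback.mono hHG)⟩

theorem SieveStep.subset {G G' : Set (S × S)} (h : SieveStep π decs incs G G') : G' ⊆ G := by
  obtain ⟨e, -, rfl⟩ := h
  exact Set.sdiff_subset

theorem subset_of_sieveRun {G G' : Set (S × S)}
    (h : Relation.ReflTransGen (SieveStep π decs incs) G G') : G' ⊆ G := by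
  induction h with
  | refl => exact subset_rfl
  | tail _ hstep ih => exact hstep.subset.trans ih

theorem SieveStep.superset_of_final {F G G' : Set (S × S)}
    (hF : ∀ F', ¬ SieveStep π decs incs F F') (hFG : F ⊆ G) (h : SieveStep π decs incs G G') :
    F ⊆ G' := by
  obtain ⟨e, hrem, rfl⟩ := h
  intro f hf
  refine ⟨hFG hf, fun hfe => hF (F \ {e}) ⟨e, hrem.of_subset hFG ?_, rfl⟩⟩
  rwa [← Set.mem_singleton_iff.mp hfe]

theorem superset_of_final_of_sieveRun {F G G' : Set (S × S)}
    (hF : ∀ F', ¬ SieveStep π decs incs F F') (hFG : F ⊆ G)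
    (h : Relation.ReflTransGen (SieveStep π decs incs) G G') : F ⊆ G' := by
  induction h with
  | refl => exact hFG
  | tail _ hstep ih => exact hstep.superset_of_final hF ih

theorem sieveRun_final_unique {G F F' : Set (S × S)}
    (hF : Relation.ReflTransGen (SieveStep π decs incs) G F)
    (hFfinal : ∀ F'', ¬ SieveStep π decs incs F F'')
    (hF' : Relation.ReflTransGen (SieveStep π decs incs) G F')
    (hF'final : ∀ F'', ¬ SieveStep π decs incs F' F'') :
    F = F' :=
  (superset_of_final_of_sieveRun hFfinal (subset_of_sieveRun hF) hF').antisymm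
    (superset_of_final_of_sieveRun hF'final (subset_of_sieveRun hF') hF)

theorem sieveRun_of_steps {n : ℕ} {Gs : ℕ → Set (S × S)}
    (h : ∀ i < n, SieveStep π decs incs (Gs i) (Gs (i + 1))) :
    Relation.ReflTransGen (SieveStep π decs incs) (Gs 0) (Gs n) :=
  (reflTransGen_of_succ_of_le (fun i j => SieveStep π decs incs (Gs i) (Gs j))
    (fun i hi => h i hi.2) n.zero_le).lift Gs fun _ _ => id

end FondPaper

theorem stmt5_general (S A V : Type)
    (P : FOND S A)
    (π : S → Option A) (decs incs : A → Set V)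
    (n m : ℕ) (Gs Hs : ℕ → Set (S × S))
    (hG0 : Gs 0 = PolicyEdges P π)
    (hGstep : ∀ i < n, SieveStep π decs incs (Gs i) (Gs (i + 1)))
    (hGmax : ∀ G', ¬ SieveStep π decs incs (Gs n) G')
    (hH0 : Hs 0 = PolicyEdges P π)
    (hHstep : ∀ i < m, SieveStep π decs incs (Hs i) (Hs (i + 1)))
    (hHmax : ∀ H', ¬ SieveStep π decs incs (Hs m) H') :
    Gs n = Hs m := by
  have hGrun := sieveRun_of_steps hGstep
  have hHrun := sieveRun_of_steps hHstep
  rw [hG0] at hGrun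
  rw [hH0] at hHrun
  exact sieveRun_final_unique hGrun hGmax hHrun hHmax

/-- the final graph of the Sieve procedure on the policy graph G(P, π)
is independent of the order of edge removals: any two maximal sequences of Sieve
edge removals starting from G(P, π) yield the same final graph. -/
theorem stmt5 (S A V : Type) [Finite S] [Finite A] [Finite V]
    (P : FOND S A) (hgoal : P.goal.Nonempty)
    (π : S → Option A) (hπ : IsPolicy P π) (decs incs : A → Set V)
    (n m : ℕ) (Gs Hs : ℕ → Set (S × S))
    (hG0 : Gs 0 = PolicyEdges P π)
    (hGstep : ∀ i < n, SieveStep π decs incs (Gs i) (Gs (i + 1)))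
    (hGmax : ∀ G', ¬ SieveStep π decs incs (Gs n) G')
    (hH0 : Hs 0 = PolicyEdges P π)
    (hHstep : ∀ i < m, SieveStep π decs incs (Hs i) (Hs (i + 1)))
    (hHmax : ∀ H', ¬ SieveStep π decs incs (Hs m) H') :
    Gs n = Hs m :=
  stmt5_general S A V P π decs incs n m Gs Hs hG0 hGstep hGmax hH0 hHstep hHmax
end

section
/- For any FOND+ problem ⟨P, C⟩ and any policy π: π solves ⟨P, C⟩ if and only if every state reachable by π is terminating (per the inductive FOND+ termination definition). -/
open FondPaper

/-!
If every reached state terminates, let `τ` be an infinite fair trajectory avoiding the goal.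
From some point on it only visits recurrent states, and the non-recurrent states form a set closed
under the termination rules: a recurrent state that is fair-for this set sees the `B`-actions of
its constraint only finitely often (otherwise a cycle between two late visits would contain one and
leave the recurrent states), so fairness makes all its successors recurrent. Hence no recurrent
state terminates, which is absurd. A finite maximal trajectory ends in a terminating non-goal
state, where the policy is applicable.

Conversely, if a reached state does not terminate, every reached non-terminating state has a
non-terminating successor, all of them when it is fair-for the terminating states. A closed walk
through every edge of a bottom strongly connected component of these steps, repeated forever after
a prefix, is an infinite trajectory avoiding the goal. It is fair: at a state that is not
fair-for the terminating states, each constraint has a cycle with a `B`-action that stays inside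
the component, and that action recurs.
-/

namespace FondPaper

open Relation

section Walks

variable {α : Type*} {r : α → α → Prop}

lemma exists_reflTransGen_bottom [Finite α] (r : α → α → Prop) (x : α) :
    ∃ m, ReflTransGen r x m ∧ ∀ y, ReflTransGen r m y → ReflTransGen r y m := by
  let above : α → α → Prop := fun a b => ReflTransGen r b a ∧ ¬ ReflTransGen r a b
  have : IsTrans α above :=
    ⟨fun _ _ _ hab hbc => ⟨hbc.1.trans hab.1, fun hac => hbc.2 (hab.1.trans hac)⟩⟩
  have : Std.Irrefl above := ⟨fun _ h => h.2 h.1⟩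
  obtain ⟨m, hxm, hmin⟩ :=
    (Finite.wellFounded_of_trans_of_irrefl above).has_min {y | ReflTransGen r x y} ⟨x, .refl⟩
  exact ⟨m, hxm, fun y hy => by_contra fun hym => hmin y (hxm.trans hy) ⟨hy, hym⟩⟩

def IsWalk (r : α → α → Prop) (t : ℕ → α) (k : ℕ) : Prop :=
  ∀ i < k, r (t i) (t (i + 1))

def walkEdges (t : ℕ → α) (k : ℕ) : Set (α × α) :=
  {e | ∃ i < k, (t i, t (i + 1)) = e}

def walkAppend (t : ℕ → α) (k : ℕ) (t' : ℕ → α) (i : ℕ) : α :=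
  if i ≤ k then t i else t' (i - k)

variable {t t' : ℕ → α} {k k' : ℕ}

lemma walkAppend_of_le {i : ℕ} (hi : i ≤ k) : walkAppend t k t' i = t i := if_pos hi

lemma walkAppend_add (h : t k = t' 0) (j : ℕ) : walkAppend t k t' (k + j) = t' j := by
  unfold walkAppend
  split_ifs with hj
  · obtain rfl : j = 0 := by omega
    simpa using h
  · simp

lemma IsWalk.append (ht : IsWalk r t k) (ht' : IsWalk r t' k') (h : t k = t' 0) :
    IsWalk r (walkAppend t k t') (k + k') := by
  intro i hi
  rcases lt_or_ge i k with hik | hik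
  · rw [walkAppend_of_le hik.le, walkAppend_of_le hik]
    exact ht i hik
  · obtain ⟨j, rfl⟩ := Nat.exists_eq_add_of_le hik
    rw [walkAppend_add h, add_assoc, walkAppend_add h]
    exact ht' j (by omega)

lemma walkEdges_append (h : t k = t' 0) :
    walkEdges t k ∪ walkEdges t' k' ⊆ walkEdges (walkAppend t k t') (k + k') := by
  rintro e (⟨i, hi, rfl⟩ | ⟨j, hj, rfl⟩)
  · exact ⟨i, by omega, by rw [walkAppend_of_le hi.le, walkAppend_of_le hi]⟩
  · exact ⟨k + j, by omega, by rw [walkAppend_add h, add_assoc, walkAppend_add h]⟩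

lemma IsWalk.reflTransGen (ht : IsWalk r t k) {j : ℕ} (hj : j ≤ k) :
    ReflTransGen r (t 0) (t j) := by
  induction j with
  | zero => rfl
  | succ j ih => exact (ih (by omega)).tail (ht j (by omega))

lemma IsWalk.mono {p : α → α → Prop} (hrp : ∀ x y, r x y → p x y) (ht : IsWalk r t k) :
    IsWalk p t k :=
  fun i hi => hrp _ _ (ht i hi)

lemma isWalk_edge {x y : α} (h : r x y) : IsWalk r (fun i => if i = 0 then x else y) 1 := by
  intro i hi
  obtain rfl : i = 0 := by omega
  simpa using h

lemma reflTransGen_iff_exists_isWalk {x y : α} :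
    ReflTransGen r x y ↔ ∃ t k, t 0 = x ∧ t k = y ∧ IsWalk r t k := by
  refine ⟨fun h => ?_, fun ⟨t, k, h0, hk, ht⟩ => h0 ▸ hk ▸ ht.reflTransGen le_rfl⟩
  induction h with
  | refl => exact ⟨fun _ => x, 0, rfl, rfl, fun i hi => absurd hi (Nat.not_lt_zero i)⟩
  | @tail y z _ hyz ih =>
    obtain ⟨t, k, h0, hk, ht⟩ := ih
    refine ⟨walkAppend t k (fun i => if i = 0 then y else z), k + 1, ?_, ?_,
      ht.append (isWalk_edge hyz) (by simpa using hk)⟩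
    · rwa [walkAppend_of_le (Nat.zero_le k)]
    · rw [walkAppend_add (by simpa using hk)]
      simp

lemma exists_isWalk_through {x y z w : α} (hxy : ReflTransGen r x y) (hyz : r y z)
    (hzw : ReflTransGen r z w) :
    ∃ t k, t 0 = x ∧ t k = w ∧ IsWalk r t k ∧ (y, z) ∈ walkEdges t k := by
  obtain ⟨u, a, hu0, hua, hu⟩ := reflTransGen_iff_exists_isWalk.mp hxy
  obtain ⟨v, b, hv0, hvb, hv⟩ := reflTransGen_iff_exists_isWalk.mp hzw
  set e : ℕ → α := fun i => if i = 0 then y else z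
  have hue : u a = e 0 := hua
  have hev : walkAppend u a e (a + 1) = v 0 := by rw [walkAppend_add hue]; exact hv0.symm
  refine ⟨walkAppend (walkAppend u a e) (a + 1) v, a + 1 + b, ?_, ?_,
    (hu.append (isWalk_edge hyz) hue).append hv hev, ?_⟩
  · rwa [walkAppend_of_le (Nat.zero_le _), walkAppend_of_le (Nat.zero_le _)]
  · rwa [walkAppend_add hev]
  · refine walkEdges_append hev (Or.inl (walkEdges_append hue (Or.inr ⟨0, one_pos, ?_⟩)))
    simp [e]

lemma exists_closed_isWalk_covering {m : α} {E : Set (α × α)} (hE : E.Finite)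
    (hcov : ∀ e ∈ E, ReflTransGen r m e.1 ∧ r e.1 e.2 ∧ ReflTransGen r e.2 m) :
    ∃ t k, t 0 = m ∧ t k = m ∧ IsWalk r t k ∧ E ⊆ walkEdges t k := by
  induction E, hE using Set.Finite.induction_on with
  | empty => exact ⟨fun _ => m, 0, rfl, rfl, fun i hi => absurd hi (Nat.not_lt_zero i), by simp⟩
  | @insert e E _ _ ih =>
    obtain ⟨t, k, ht0, htk, ht, hEt⟩ := ih fun e' he' => hcov e' (Set.mem_insert_of_mem e he')
    obtain ⟨hme, he, hem⟩ := hcov e (Set.mem_insert e E)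
    obtain ⟨u, a, hu0, hua, hu, heu⟩ := exists_isWalk_through hme he hem
    have htu : t k = u 0 := htk.trans hu0.symm
    refine ⟨walkAppend t k u, k + a, ?_, ?_, ht.append hu htu, ?_⟩
    · rwa [walkAppend_of_le (Nat.zero_le _)]
    · rwa [walkAppend_add htu]
    · exact Set.insert_subset (walkEdges_append htu (Or.inr heu))
        (hEt.trans fun e' he' => walkEdges_append htu (Or.inl he'))

def lasso (σ : ℕ → α) (q : ℕ) (t : ℕ → α) (L : ℕ) : ℕ → α :=
  walkAppend σ q (fun n => t (n % L))

variable {σ : ℕ → α} {q L : ℕ}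

lemma lasso_add (h : σ q = t 0) (n : ℕ) : lasso σ q t L (q + n) = t (n % L) :=
  walkAppend_add (by simpa using h) n

lemma apply_mod_of_le (hL : t L = t 0) {i : ℕ} (hi : i ≤ L) : t (i % L) = t i := by
  rcases hi.lt_or_eq with hi | rfl
  · rw [Nat.mod_eq_of_lt hi]
  · rw [Nat.mod_self, hL]

lemma lasso_step (hσ : IsWalk r σ q) (ht : IsWalk r t L) (hL0 : 0 < L) (hL : t L = t 0)
    (h : σ q = t 0) (n : ℕ) : r (lasso σ q t L n) (lasso σ q t L (n + 1)) := by
  have hper : IsWalk r (fun n => t (n % L)) (n + 1) := by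
    intro j _
    have hj := Nat.mod_lt j hL0
    show r (t (j % L)) (t ((j + 1) % L))
    rw [← Nat.mod_add_mod j L 1, apply_mod_of_le hL (i := j % L + 1) (by omega)]
    exact ht _ hj
  exact hσ.append hper (by simpa using h) n (by omega)

lemma infinite_lasso_edge (h : σ q = t 0) (hL : t L = t 0) {x y : α}
    (he : (x, y) ∈ walkEdges t L) :
    {n | lasso σ q t L n = x ∧ lasso σ q t L (n + 1) = y}.Infinite := by
  obtain ⟨i, hi, hixy⟩ := he
  obtain ⟨rfl, rfl⟩ := Prod.mk.inj hixy
  refine Set.infinite_of_injective_forall_mem (f := fun j => q + (i + L * j)) ?_ fun j => ?_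
  · intro j₁ j₂ hj
    exact Nat.eq_of_mul_eq_mul_left (by omega : 0 < L) (by simpa using hj)
  · show lasso σ q t L (q + (i + L * j)) = t i ∧ lasso σ q t L (q + (i + L * j) + 1) = t (i + 1)
    rw [add_assoc q, show i + L * j + 1 = i + 1 + L * j by omega, lasso_add h, lasso_add h,
      Nat.add_mul_mod_self_left, Nat.add_mul_mod_self_left, apply_mod_of_le hL hi.le,
      apply_mod_of_le hL hi]
    exact ⟨rfl, rfl⟩

end Walks

variable {S A : Type} {P : FOND S A} {π : S → Option A} {C : Set (Set A × Set A)}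

lemma isTraj_some_iff {t : ℕ → S} {k : ℕ} :
    IsTraj P π ⟨t, some k⟩ ↔ t 0 = P.init ∧ IsWalk (PStep P π) t k := by
  refine and_congr_right fun _ => ⟨fun h i hi => h i fun n hn => ?_, fun h i hi => h i (hi k rfl)⟩
  cases hn
  exact hi

lemma isTraj_none_iff {f : ℕ → S} :
    IsTraj P π ⟨f, none⟩ ↔ f 0 = P.init ∧ ∀ n, PStep P π (f n) (f (n + 1)) :=
  and_congr_right fun _ => ⟨fun h n => h n fun _ hn => (by cases hn), fun h n _ => h n⟩

lemma reachedBy_iff_reachesFrom {s : S} : ReachedBy P π s ↔ ReachesFrom P π P.init s := by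
  constructor
  · rintro ⟨⟨t, _⟩, hτ, k, rfl, rfl⟩
    obtain ⟨h0, ht⟩ := isTraj_some_iff.mp hτ
    exact h0 ▸ ht.reflTransGen le_rfl
  · intro h
    obtain ⟨t, k, h0, hk, ht⟩ := reflTransGen_iff_exists_isWalk.mp h
    exact ⟨⟨t, some k⟩, isTraj_some_iff.mpr ⟨h0, ht⟩, k, rfl, hk⟩

lemma FairFor.mono {T T' : Set S} (h : T ⊆ T') {s : S} (hs : FairFor P C π T s) :
    FairFor P C π T' s := by
  obtain ⟨c, hc, ha, hcyc⟩ := hs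
  exact ⟨c, hc, ha, fun t k hk hb => (hcyc t k hk hb).imp fun _ hj => ⟨hj.1, h hj.2⟩⟩

lemma termClosed_setOf_terminating : TermClosed P C π {s | Terminating P C π s} := by
  refine ⟨fun s hs T hT => hT.1 hs, fun s a ha hff ⟨s', hs', ht⟩ T hT => ?_,
    fun s a ha hff hne hsucc T hT => ?_⟩
  · exact hT.2.1 s a ha (hff.mono fun _ (h : Terminating P C π _) => h T hT) ⟨s', hs', ht T hT⟩
  · by_cases hffT : FairFor P C π T s
    · obtain ⟨s', hs'⟩ := hne
      exact hT.2.1 s a ha hffT ⟨s', hs', hsucc s' hs' T hT⟩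
    · exact hT.2.2 s a ha hffT hne fun s' hs' => hsucc s' hs' T hT

lemma exists_applicable_of_terminating {s : S} (ht : Terminating P C π s) (hs : s ∉ P.goal) :
    ∃ a, π s = some a ∧ (P.F a s).Nonempty := by
  refine (ht {s | s ∈ P.goal ∨ ∃ a, π s = some a ∧ (P.F a s).Nonempty}
    ⟨fun s hs => .inl hs, ?_, ?_⟩).resolve_left hs
  · rintro s a ha - ⟨s', hs', -⟩
    exact .inr ⟨a, ha, s', hs'⟩
  · intro s a ha _ hne _
    exact .inr ⟨a, ha, hne⟩

lemma eventually_infinite_fiber {β : Type*} [Finite β] (f : ℕ → β) :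
    ∀ᶠ n in Filter.atTop, {i | f i = f n}.Infinite := by
  have hfin : {n | {i | f i = f n}.Finite}.Finite :=
    (Set.toFinite {s | {i | f i = s}.Finite}).biUnion (t := fun s => {i | f i = s}) (fun _ h => h)
      |>.subset fun n hn => Set.mem_biUnion hn rfl
  rw [← Nat.cofinite_eq_atTop]
  exact hfin.eventually_cofinite_notMem

lemma cycleOn_of_segment {f : ℕ → S} (hf : ∀ n, PStep P π (f n) (f (n + 1)))
    (hng : ∀ n, f n ∉ P.goal) {s : S} {i j : ℕ} (hi : f i = s) (hj : f j = s) (hij : i < j) :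
    CycleOn P π s (fun n => f (i + n)) (j - i) :=
  ⟨by omega, hi, by simpa [Nat.add_sub_cancel' hij.le] using hj, fun n _ => ⟨hng _, hf (i + n)⟩⟩

lemma termClosed_compl_recurrent {f : ℕ → S} (hf : ∀ n, PStep P π (f n) (f (n + 1)))
    (hng : ∀ n, f n ∉ P.goal) (hfair : FairPlus P C π ⟨f, none⟩) {N : ℕ}
    (hN : ∀ n ≥ N, {i | f i = f n}.Infinite) :
    TermClosed P C π {s | {i | f i = s}.Infinite}ᶜ := by
  refine ⟨fun s hs hrec => ?_, fun s a ha hff ⟨s', hs', hs'rec⟩ hrec => ?_,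
    fun s a ha _ _ hsucc hrec => ?_⟩
  · obtain ⟨i, hi⟩ := hrec.nonempty
    exact hng i (hi ▸ hs)
  · obtain ⟨c, hc, hac, hcyc⟩ := hff
    by_cases hBfin : ∀ b ∈ c.2, {i | π (f i) = some b}.Finite
    · have hpair := hfair s ⟨rfl, hrec⟩ ⟨c, hc, hac, hBfin⟩ a ha s' hs'
      exact hs'rec ((hpair.image (add_left_injective 1).injOn).mono
        (by rintro _ ⟨i, ⟨-, hi⟩, rfl⟩; exact hi))
    obtain ⟨b, hb, hbinf : {i | π (f i) = some b}.Infinite⟩ := not_forall₂.mp hBfin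
    obtain ⟨i₁, hi₁, hNi₁⟩ := hrec.exists_gt N
    obtain ⟨i₂, hi₂, h₁₂⟩ := hbinf.exists_gt i₁
    obtain ⟨i₃, hi₃, h₂₃⟩ := hrec.exists_gt i₂
    obtain ⟨j, -, hj⟩ := hcyc _ _ (cycleOn_of_segment hf hng hi₁ hi₃ (h₁₂.trans h₂₃))
      ⟨i₂ - i₁, by omega, b, by rwa [Nat.add_sub_cancel' h₁₂.le], hb⟩
    exact hj (hN _ (by omega))
  · obtain ⟨i, hi, hNi⟩ := hrec.exists_gt N
    obtain ⟨a', ha', hstep⟩ := hf i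
    rw [show f i = s from hi, ha, Option.some_inj] at ha'
    exact hsucc _ (hi ▸ ha' ▸ hstep) (hN (i + 1) (by omega))

lemma solvesPlus_of_forall_terminating [Finite S]
    (h : ∀ s, ReachedBy P π s → Terminating P C π s) : SolvesPlus P C π := by
  rintro ⟨f, _ | n⟩ hτ hmax hfair <;> by_contra hng
  · obtain ⟨hf0, hf⟩ := isTraj_none_iff.mp hτ
    have hng' : ∀ n, f n ∉ P.goal := fun n hn => hng ⟨n, fun _ h => (by cases h), hn⟩
    obtain ⟨N, hN⟩ := Filter.eventually_atTop.mp (eventually_infinite_fiber f)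
    have hreach : ReachedBy P π (f N) :=
      reachedBy_iff_reachesFrom.mpr (hf0 ▸ IsWalk.reflTransGen (fun i _ => hf i) le_rfl)
    exact h _ hreach _ (termClosed_compl_recurrent hf hng' hfair hN) (hN N le_rfl)
  · have hn : f n ∉ P.goal := fun hg => hng ⟨n, fun _ h => (Option.some_inj.mp h).le, hg⟩
    obtain ⟨a, ha, hne⟩ := exists_applicable_of_terminating (h _ ⟨_, hτ, n, rfl, rfl⟩) hn
    rcases hmax with h | ⟨_, ⟨⟩, hgoal | hnone | ⟨a', ha', hna⟩⟩
    · cases h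
    · exact hn hgoal.1
    · simp [hnone] at ha
    · rw [ha, Option.some_inj] at ha'
      exact hna (ha' ▸ hne)

def NonTermStep (P : FOND S A) (C : Set (Set A × Set A)) (π : S → Option A) (s s' : S) : Prop :=
  PStep P π s s' ∧ ¬ Terminating P C π s'

lemma not_terminating_of_reflTransGen {s s' : S} (h : ReflTransGen (NonTermStep P C π) s s')
    (hs : ¬ Terminating P C π s) : ¬ Terminating P C π s' := by
  induction h with
  | refl => exact hs
  | tail _ hstep _ => exact hstep.2

lemma reachedBy_of_reflTransGen {s s' : S} (h : ReflTransGen (NonTermStep P C π) s s')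
    (hs : ReachedBy P π s) : ReachedBy P π s' :=
  reachedBy_iff_reachesFrom.mpr
    ((reachedBy_iff_reachesFrom.mp hs).trans (ReflTransGen.mono (fun _ _ h => h.1) _ _ h))

lemma not_terminating_of_fairFor {s s' : S} {a : A} (hs : ¬ Terminating P C π s)
    (ha : π s = some a) (hff : FairFor P C π {s | Terminating P C π s} s) (hs' : s' ∈ P.F a s) :
    ¬ Terminating P C π s' :=
  fun ht => hs (termClosed_setOf_terminating.2.1 s a ha hff ⟨s', hs', ht⟩)

lemma exists_applicable_of_solvesPlus (hπ : IsPolicy P π) (hsol : SolvesPlus P C π) {s : S}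
    (hs : ReachedBy P π s) (hnt : ¬ Terminating P C π s) :
    ∃ a, π s = some a ∧ (P.F a s).Nonempty := by
  by_contra hno
  obtain ⟨⟨t, _⟩, hτ, n, rfl, rfl⟩ := hs
  have hmax : MaximalTraj P π ⟨t, some n⟩ := by
    refine .inr ⟨n, rfl, .inr ?_⟩
    rcases (π (t n)).eq_none_or_eq_some with h | ⟨a, h⟩
    · exact .inl h
    · exact .inr ⟨a, h, fun happ => hno ⟨a, h, happ⟩⟩
  obtain ⟨i, hi, hgoal⟩ := hsol _ hτ hmax fun _ hrec => absurd hrec.1 (by simp)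
  rcases (hi n rfl).lt_or_eq with hlt | rfl
  · obtain ⟨a, ha, -⟩ := (isTraj_some_iff.mp hτ).2 i hlt
    simp [hπ _ hgoal] at ha
  · exact hnt fun T hT => hT.1 hgoal

lemma exists_nonTermStep (hπ : IsPolicy P π) (hsol : SolvesPlus P C π) {s : S}
    (hs : ReachedBy P π s) (hnt : ¬ Terminating P C π s) : ∃ s', NonTermStep P C π s s' := by
  obtain ⟨a, ha, s', hs'⟩ := exists_applicable_of_solvesPlus hπ hsol hs hnt
  by_cases hff : FairFor P C π {s | Terminating P C π s} s
  · exact ⟨s', ⟨a, ha, hs'⟩, not_terminating_of_fairFor hnt ha hff hs'⟩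
  · by_contra hall
    refine hnt (termClosed_setOf_terminating.2.2 s a ha hff ⟨s', hs'⟩ fun s'' hs'' => ?_)
    by_contra h
    exact hall ⟨s'', ⟨a, ha, hs''⟩, h⟩

lemma fairPlus_of_infinite_nonTermStep {m : S} {f : ℕ → S} {q : ℕ}
    (hm : ¬ Terminating P C π m) (hR : ∀ n ≥ q, ReflTransGen (NonTermStep P C π) m (f n))
    (hsucc : ∀ x, ReflTransGen (NonTermStep P C π) m x → ∃ y, NonTermStep P C π x y)
    (hE : ∀ x y, ReflTransGen (NonTermStep P C π) m x → NonTermStep P C π x y →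
      {n | f n = x ∧ f (n + 1) = y}.Infinite) :
    FairPlus P C π ⟨f, none⟩ := by
  intro s hrec hocc a ha s' hs'
  obtain ⟨n, hn : f n = s, hqn⟩ := hrec.2.exists_gt q
  have hsR : ReflTransGen (NonTermStep P C π) m s := hn ▸ hR n hqn.le
  have hsnt := not_terminating_of_reflTransGen hsR hm
  by_cases hff : FairFor P C π {s | Terminating P C π s} s
  · exact hE s s' hsR ⟨⟨a, ha, hs'⟩, not_terminating_of_fairFor hsnt ha hff hs'⟩
  obtain ⟨c, hc, hac, hfin⟩ := hocc
  refine absurd ⟨c, hc, hac, fun t k hcyc ⟨i, hik, b, hb, hbc⟩ => ?_⟩ hff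
  by_contra! havoid
  have hwalk : IsWalk (NonTermStep P C π) t k := fun j hj => ⟨(hcyc.2.2.2 j hj).2, havoid _ hj⟩
  have hiR : ReflTransGen (NonTermStep P C π) m (t i) :=
    hsR.trans (hcyc.2.1 ▸ hwalk.reflTransGen hik)
  obtain ⟨y, hy⟩ := hsucc _ hiR
  exact (hE _ y hiR hy).mono (fun n hn => by simp [hn.1, hb]) (hfin b hbc)

lemma terminating_of_solvesPlus [Finite S] (hπ : IsPolicy P π) (hsol : SolvesPlus P C π) {s : S}
    (hs : ReachedBy P π s) : Terminating P C π s := by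
  by_contra hnt
  obtain ⟨m, hsm, hbot⟩ := exists_reflTransGen_bottom (NonTermStep P C π) s
  have hR : ∀ x, ReflTransGen (NonTermStep P C π) m x → ReachedBy P π x ∧ ¬ Terminating P C π x :=
    fun x hx => ⟨reachedBy_of_reflTransGen (hsm.trans hx) hs,
      not_terminating_of_reflTransGen (hsm.trans hx) hnt⟩
  have hsucc : ∀ x, ReflTransGen (NonTermStep P C π) m x → ∃ y, NonTermStep P C π x y :=
    fun x hx => exists_nonTermStep hπ hsol (hR x hx).1 (hR x hx).2
  obtain ⟨t, L, ht0, htL, ht, hcov⟩ := exists_closed_isWalk_covering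
    (E := {e | ReflTransGen (NonTermStep P C π) m e.1 ∧ NonTermStep P C π e.1 e.2})
    (Set.toFinite _) fun e he => ⟨he.1, he.2, hbot _ (he.1.tail he.2)⟩
  obtain ⟨σ, q, hσ0, hσq, hσ⟩ :=
    reflTransGen_iff_exists_isWalk.mp (reachedBy_iff_reachesFrom.mp (hR m .refl).1)
  have hσt : σ q = t 0 := hσq.trans ht0.symm
  have hL : t L = t 0 := htL.trans ht0.symm
  have hL0 : 0 < L := by
    obtain ⟨y, hy⟩ := hsucc m .refl
    obtain ⟨i, hi, -⟩ := hcov (a := (m, y)) ⟨.refl, hy⟩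
    omega
  have hf := lasso_step hσ (ht.mono fun _ _ h => h.1) hL0 hL hσt
  have hfair : FairPlus P C π ⟨lasso σ q t L, none⟩ := by
    refine fairPlus_of_infinite_nonTermStep (hR m .refl).2 (q := q) (fun n hn => ?_) hsucc
      fun x y hx hxy => infinite_lasso_edge hσt hL (hcov ⟨hx, hxy⟩)
    obtain ⟨j, rfl⟩ := Nat.exists_eq_add_of_le hn
    rw [lasso_add hσt, ← ht0]
    exact ht.reflTransGen (Nat.mod_lt j hL0).le
  obtain ⟨i, -, hi⟩ := hsol _ (isTraj_none_iff.mpr ⟨by simpa [lasso, walkAppend] using hσ0, hf⟩)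
    (.inl rfl) hfair
  obtain ⟨a, ha, -⟩ := hf i
  simp [hπ _ hi] at ha

end FondPaper

theorem stmt7_general (S A : Type) [Finite S] (P : FOND S A)
    (π : S → Option A) (hπ : IsPolicy P π)
    (C : Set (Set A × Set A)) :
    SolvesPlus P C π ↔ ∀ s, ReachedBy P π s → Terminating P C π s :=
  ⟨fun hsol _ hs => terminating_of_solvesPlus hπ hsol hs, solvesPlus_of_forall_terminating⟩

/-- π solves the FOND+ problem ⟨P, C⟩ iff every state reachable by π
terminates per the inductive FOND+ termination definition. -/
theorem stmt7 (S A : Type) [Finite S] [Finite A] (P : FOND S A) (hgoal : P.goal.Nonempty)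
    (π : S → Option A) (hπ : IsPolicy P π)
    (C : Set (Set A × Set A)) (hC : WellFormedC P C) :
    SolvesPlus P C π ↔ ∀ s, ReachedBy P π s → Terminating P C π s :=
  stmt7_general S A P π hπ C
end

section
/- If a policy π solves a FOND+ problem ⟨P, C⟩, then π is a strong-cyclic solution of the underlying FOND problem P (i.e., if π were not strong-cyclic, one could construct a maximal, non-goal-reaching π-trajectory that is fair for ⟨P, C⟩). -/
open FondPaper

namespace FondPaper

open Relation

section Sequences

variable {α : Type*}

lemma infinite_setOf_add_iff (p : ℕ → Prop) (n : ℕ) :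
    {j | p (j + n)}.Infinite ↔ {i | p i}.Infinite := by
  simp only [← Nat.frequently_atTop_iff_infinite]
  rw [← Filter.frequently_map (m := (· + n)), Filter.map_add_atTop_eq_nat]

lemma Set.Countable.exists_seq_infinite_fiber {T : Set α} (hT : T.Countable) (hne : T.Nonempty) :
    ∃ f : ℕ → α, (∀ k, f k ∈ T) ∧ ∀ t ∈ T, {k | f k = t}.Infinite := by
  obtain ⟨g, rfl⟩ := hT.exists_eq_range hne
  refine ⟨fun k => g k.unpair.1, fun k => Set.mem_range_self _, ?_⟩
  rintro _ ⟨j, rfl⟩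
  exact Set.infinite_of_injective_forall_mem (f := Nat.pair j)
    (fun _ _ h => (Nat.pair_eq_pair.mp h).2) fun k => by simp

lemma exists_seq_of_reflTransGen {r : α → α → Prop} {a b : α} (h : ReflTransGen r a b) :
    ∃ (x : ℕ → α) (m : ℕ), x 0 = a ∧ x m = b ∧ ∀ i < m, r (x i) (x (i + 1)) := by
  induction h with
  | refl => exact ⟨fun _ => a, 0, rfl, rfl, by simp⟩
  | @tail b c _ hbc ih =>
    obtain ⟨x, m, hx0, hxm, hx⟩ := ih
    refine ⟨Function.update x (m + 1) c, m + 1, by simpa using hx0, by simp, fun i hi => ?_⟩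
    rcases Nat.lt_succ_iff_lt_or_eq.mp hi with hi | rfl
    · rw [Function.update_of_ne (by omega), Function.update_of_ne (by omega)]
      exact hx i hi
    · simpa [hxm] using hbc

end Sequences

section RoundRobin

open scoped Classical

variable {α : Type*} (next : α → ℕ → α) (a : α)

/-- The current state of the round-robin walk together with the number of visits so far to
each state. -/
noncomputable def roundRobin : ℕ → α × (α → ℕ)
  | 0 => (a, fun _ => 0)
  | i + 1 =>
    let p := roundRobin i
    (next p.1 (p.2 p.1), Function.update p.2 p.1 (p.2 p.1 + 1))

noncomputable def roundRobinWalk (i : ℕ) : α := (roundRobin next a i).1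

lemma roundRobin_snd (i : ℕ) (v : α) :
    (roundRobin next a i).2 v = Nat.count (fun j => roundRobinWalk next a j = v) i := by
  induction i with
  | zero => rfl
  | succ i ih =>
    rw [Nat.count_succ, ← ih]
    by_cases h : roundRobinWalk next a i = v
    · subst h
      simp [roundRobin, roundRobinWalk]
    · simp only [roundRobin, if_neg h, add_zero]
      exact Function.update_of_ne (Ne.symm h) _ _

lemma roundRobinWalk_succ (i : ℕ) :
    roundRobinWalk next a (i + 1) =
      next (roundRobinWalk next a i)
        (Nat.count (fun j => roundRobinWalk next a j = roundRobinWalk next a i) i) := by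
  rw [← roundRobin_snd]
  rfl

variable {next a}

lemma roundRobinWalk_nth_succ {u : α} (hu : {i | roundRobinWalk next a i = u}.Infinite) (k : ℕ) :
    roundRobinWalk next a (Nat.nth (fun i => roundRobinWalk next a i = u) k + 1) = next u k := by
  rw [roundRobinWalk_succ, Nat.nth_mem_of_infinite hu k, Nat.count_nth_of_infinite hu]

lemma infinite_roundRobinWalk_transitions {u v : α}
    (hu : {i | roundRobinWalk next a i = u}.Infinite) (hv : {k | next u k = v}.Infinite) :
    {i | roundRobinWalk next a i = u ∧ roundRobinWalk next a (i + 1) = v}.Infinite := by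
  refine (hv.image (Nat.nth_strictMono hu).injective.injOn).mono ?_
  rintro _ ⟨k, hk, rfl⟩
  exact ⟨Nat.nth_mem_of_infinite hu k, (roundRobinWalk_nth_succ hu k).trans hk⟩

end RoundRobin

theorem exists_fair_walk {α : Type*} {r : α → α → Prop} {a : α}
    (hcount : ∀ b, {c | r b c}.Countable) (htotal : ∀ b, ReflTransGen r a b → ∃ c, r b c) :
    ∃ x : ℕ → α, x 0 = a ∧ (∀ i, r (x i) (x (i + 1))) ∧
      ∀ b c, {i | x i = b}.Infinite → r b c → {i | x i = b ∧ x (i + 1) = c}.Infinite := by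
  have hsched : ∀ b, ∃ f : ℕ → α,
      ReflTransGen r a b → (∀ k, r b (f k)) ∧ ∀ c, r b c → {k | f k = c}.Infinite := by
    intro b
    by_cases hb : ReflTransGen r a b
    · obtain ⟨f, hf, hfib⟩ := (hcount b).exists_seq_infinite_fiber (htotal b hb)
      exact ⟨f, fun _ => ⟨hf, hfib⟩⟩
    · exact ⟨fun _ => b, fun h => absurd h hb⟩
  choose next hnext using hsched
  set x := roundRobinWalk next a with hx
  have hstep : ∀ i, ReflTransGen r a (x i) → r (x i) (x (i + 1)) := fun i hi => by
    rw [hx, roundRobinWalk_succ]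
    exact (hnext _ hi).1 _
  have hreach : ∀ i, ReflTransGen r a (x i) := by
    intro i
    induction i with
    | zero => exact .refl
    | succ i ih => exact ih.tail (hstep i ih)
  refine ⟨x, rfl, fun i => hstep i (hreach i), fun b c hb hbc => ?_⟩
  obtain ⟨i, rfl⟩ := hb.nonempty
  exact infinite_roundRobinWalk_transitions hb ((hnext _ (hreach i)).2 c hbc)

variable {S A : Type} {P : FOND S A} {π : S → Option A}

lemma reflTransGen_of_hasStep {r : S → S → Prop} {ρ : Traj S}
    (hρ : ∀ i, ρ.HasStep i → r (ρ.states i) (ρ.states (i + 1))) {i : ℕ} (hi : ρ.Inside i) :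
    ReflTransGen r (ρ.states 0) (ρ.states i) :=
  (reflTransGen_of_succ_of_le (fun j k => r (ρ.states j) (ρ.states k))
    (fun j hj => hρ j fun m hm => hj.2.trans_le (hi m hm)) (Nat.zero_le i)).lift ρ.states
    fun _ _ h => h

lemma exists_fairAll_run (hcount : ∀ u, {v | PStep P π u v}.Countable) (s : S) :
    ∃ ρ : Traj S, ρ.states 0 = s ∧
      (∀ i, ρ.HasStep i → PStep P π (ρ.states i) (ρ.states (i + 1))) ∧
      (∀ m, ρ.len = some m → ∀ v, ¬ PStep P π (ρ.states m) v) ∧ FairAll P π ρ := by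
  by_cases htotal : ∀ u, ReachesFrom P π s u → ∃ v, PStep P π u v
  · obtain ⟨x, hx0, hstep, hfair⟩ := exists_fair_walk hcount htotal
    refine ⟨⟨x, none⟩, hx0, fun i _ => hstep i, fun _ h => (nomatch h), ?_⟩
    rintro u ⟨-, hu⟩ a ha v hv
    exact hfair u v hu ⟨a, ha, hv⟩
  · push Not at htotal
    obtain ⟨u, hsu, hu⟩ := htotal
    obtain ⟨x, m, hx0, hxm, hstep⟩ := exists_seq_of_reflTransGen hsu
    refine ⟨⟨x, some m⟩, hx0, fun i hi => hstep i (hi m rfl), ?_, fun _ h => (nomatch h.1)⟩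
    rintro _ ⟨⟩
    simpa [hxm] using hu

lemma IsTraj.states_not_mem_goal (hπ : IsPolicy P π) {τ : Traj S} (hτ : IsTraj P π τ) {i : ℕ}
    (hi : τ.HasStep i) : τ.states i ∉ P.goal := fun hg => by
  obtain ⟨a, ha, -⟩ := hτ.2 i hi
  simp [hπ _ hg] at ha

lemma maximalTraj_of_stuck {σ : Traj S} {m : ℕ} (hm : σ.len = some m)
    (hstuck : ∀ v, ¬ PStep P π (σ.states m) v) : MaximalTraj P π σ := by
  refine Or.inr ⟨m, hm, Or.inr ?_⟩
  cases ha : π (σ.states m) with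
  | none => exact Or.inl rfl
  | some a => exact Or.inr ⟨a, rfl, fun ⟨v, hv⟩ => hstuck v ⟨a, ha, hv⟩⟩

lemma FairAll.fairPlus {τ : Traj S} (h : FairAll P π τ) (C : Set (Set A × Set A)) :
    FairPlus P C π τ :=
  fun s hs _ => h s hs

/-- The trajectory `τ.states 0, …, τ.states n, ρ.states 1, ρ.states 2, …`, meant for
`ρ.states 0 = τ.states n`. -/
def Traj.splice (τ : Traj S) (n : ℕ) (ρ : Traj S) : Traj S :=
  ⟨fun i => if i ≤ n then τ.states i else ρ.states (i - n), ρ.len.map (n + ·)⟩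

section Splice

variable {τ ρ : Traj S} {n : ℕ}

lemma Traj.splice_states_of_le {i : ℕ} (hi : i ≤ n) : (τ.splice n ρ).states i = τ.states i :=
  if_pos hi

lemma Traj.splice_states_of_ge (hρ0 : ρ.states 0 = τ.states n) {i : ℕ} (hi : n ≤ i) :
    (τ.splice n ρ).states i = ρ.states (i - n) := by
  rcases hi.eq_or_lt with rfl | hi
  · simp [splice, hρ0]
  · exact if_neg hi.not_ge

lemma isTraj_splice (hτ : IsTraj P π τ) (hn : τ.len = some n) (hρ0 : ρ.states 0 = τ.states n)
    (hρ : ∀ i, ρ.HasStep i → PStep P π (ρ.states i) (ρ.states (i + 1))) :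
    IsTraj P π (τ.splice n ρ) := by
  refine ⟨(Traj.splice_states_of_le (Nat.zero_le n)).trans hτ.1, fun i hi => ?_⟩
  rcases lt_or_ge i n with hin | hni
  · rw [Traj.splice_states_of_le hin.le, Traj.splice_states_of_le hin]
    exact hτ.2 i fun m hm => by grind
  · rw [Traj.splice_states_of_ge hρ0 hni, Traj.splice_states_of_ge hρ0 (by omega),
      show i + 1 - n = i - n + 1 by omega]
    exact hρ _ fun m hm => by grind [Traj.HasStep, Traj.splice]

lemma maximalTraj_splice (hρ0 : ρ.states 0 = τ.states n)
    (hρ : ∀ m, ρ.len = some m → ∀ v, ¬ PStep P π (ρ.states m) v) :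
    MaximalTraj P π (τ.splice n ρ) := by
  cases hlen : ρ.len with
  | none => exact Or.inl (by simp [Traj.splice, hlen])
  | some m =>
    refine maximalTraj_of_stuck (m := n + m) (by simp [Traj.splice, hlen]) ?_
    rw [Traj.splice_states_of_ge hρ0 (Nat.le_add_right n m), Nat.add_sub_cancel_left]
    exact hρ m hlen

lemma FairAll.splice (hρ0 : ρ.states 0 = τ.states n) (hρ : FairAll P π ρ) :
    FairAll P π (τ.splice n ρ) := by
  have hshift : ∀ i, (τ.splice n ρ).states (i + n) = ρ.states i := fun i => by
    rw [Traj.splice_states_of_ge hρ0 (Nat.le_add_left n i), Nat.add_sub_cancel]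
  rintro u ⟨hlen, hu⟩ a ha v hv
  rw [← infinite_setOf_add_iff _ n] at hu ⊢
  simp only [hshift, add_right_comm _ n 1] at hu ⊢
  exact hρ u ⟨Option.map_eq_none_iff.mp hlen, hu⟩ a ha v hv

lemma not_reachesGoal_splice (hπ : IsPolicy P π) (hτ : IsTraj P π τ) (hn : τ.len = some n)
    (hρ0 : ρ.states 0 = τ.states n) (hρ : ∀ i, ρ.Inside i → ρ.states i ∉ P.goal) :
    ¬ ReachesGoal P (τ.splice n ρ) := by
  rintro ⟨i, hi, hg⟩
  rcases lt_or_ge i n with hin | hni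
  · rw [Traj.splice_states_of_le hin.le] at hg
    exact hτ.states_not_mem_goal hπ (fun m hm => by grind) hg
  · rw [Traj.splice_states_of_ge hρ0 hni] at hg
    exact hρ _ (fun m hm => by grind [Traj.Inside, Traj.splice]) hg

end Splice

end FondPaper

theorem stmt9_general (S A : Type) [Finite S] (P : FOND S A)
    (π : S → Option A) (hπ : IsPolicy P π)
    (C : Set (Set A × Set A))
    (hsolve : SolvesPlus P C π) :
    StrongCyclic P π := by
  rintro _ ⟨τ, hτ, n, hn, rfl⟩
  by_contra! hno
  obtain ⟨ρ, hρ0, hρstep, hρmax, hρfair⟩ :=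
    exists_fairAll_run (P := P) (π := π) (fun _ => Set.to_countable _) (τ.states n)
  have hρgoal : ∀ i, ρ.Inside i → ρ.states i ∉ P.goal := fun i hi hg =>
    hno _ hg (hρ0 ▸ reflTransGen_of_hasStep hρstep hi)
  exact not_reachesGoal_splice hπ hτ hn hρ0 hρgoal <|
    hsolve _ (isTraj_splice hτ hn hρ0 hρstep) (maximalTraj_splice hρ0 hρmax)
      ((hρfair.splice hρ0).fairPlus C)

/-- if π solves the FOND+ problem ⟨P, C⟩ then π is a strong-cyclic
solution of the underlying FOND problem P. -/
theorem stmt9 (S A : Type) [Finite S] [Finite A] (P : FOND S A) (hgoal : P.goal.Nonempty)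
    (π : S → Option A) (hπ : IsPolicy P π)
    (C : Set (Set A × Set A)) (hC : WellFormedC P C)
    (hsolve : SolvesPlus P C π) :
    StrongCyclic P π :=
  stmt9_general S A P π hπ C hsolve
end
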